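/- Let D be the double fan and G_D its group of homeomorphisms fixing all marked points, with the compact-open topology, acting on D by evaluation. If f : D → ℝ is a bounded continuous function that is π-uniform for this action, then f(e₀) = f(−e₀). -/

import Mathlib

noncomputable section

/-- The group of self-homeomorphisms of a topological space, under composition. -/
instance homeoGroup (X : Type*) [TopologicalSpace X] : Group (X ≃ₜ X) where
  mul a b := b.trans a
  one := Homeomorph.refl X
  inv := Homeomorph.symm
  mul_assoc a b c := Homeomorph.ext fun _ => rfl
  one_mul a := Homeomorph.ext fun _ => rfl
  mul_one a := Homeomorph.ext fun _ => rfl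
  inv_mul_cancel a := Homeomorph.ext fun x => a.symm_apply_apply x

/-- The real Hilbert space `ℓ²(ℕ)`. -/
abbrev DFanAmbient : Type := lp (fun _ : ℕ => ℝ) 2

/-- The `n`-th basic vector `eₙ` of `ℓ²(ℕ)`. -/
def dBasis (n : ℕ) : DFanAmbient := lp.single 2 n 1

/-- The double fan: the union over `n ≥ 1` of the straight-line segments `[e₀, eₙ]`
and `[-e₀, eₙ]` inside `ℓ²(ℕ)`, with the subspace topology. -/
def DoubleFan : Set DFanAmbient :=
  (⋃ n ∈ Set.Ici 1, segment ℝ (dBasis 0) (dBasis n)) ∪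
    ⋃ n ∈ Set.Ici 1, segment ℝ (-dBasis 0) (dBasis n)

/-- The marked points of the double fan: the points `(1 - 1/k)a + (1/k)eₙ` for
`a ∈ {e₀, -e₀}` and `k, n ≥ 1`. -/
def DMarked : Set ↥DoubleFan :=
  {x | ∃ (a : DFanAmbient) (k n : ℕ), (a = dBasis 0 ∨ a = -dBasis 0) ∧ 1 ≤ k ∧ 1 ≤ n ∧
    (x : DFanAmbient) = (1 - ((k : ℝ))⁻¹) • a + ((k : ℝ))⁻¹ • dBasis n}

/-- The group of all homeomorphisms of the double fan fixing every marked point. -/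
def DGroup : Subgroup (↥DoubleFan ≃ₜ ↥DoubleFan) where
  carrier := {g | ∀ x ∈ DMarked, g x = x}
  one_mem' := fun x _ => rfl
  mul_mem' := by
    intro a b ha hb x hx
    show a (b x) = x
    rw [hb x hx, ha x hx]
  inv_mem' := by
    intro a ha x hx
    show a.symm x = x
    conv_lhs => rw [← ha x hx]
    exact a.symm_apply_apply x

/-- The group `DGroup` carries the compact-open topology. -/
instance : TopologicalSpace DGroup :=
  TopologicalSpace.induced
    (fun g : DGroup => toContinuousMap (g : ↥DoubleFan ≃ₜ ↥DoubleFan))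
    ContinuousMap.compactOpen

/-- The base point `e₀` of the double fan. -/
def dPlus : ↥DoubleFan :=
  ⟨dBasis 0, Set.mem_union_left _
    (Set.mem_biUnion (Set.mem_Ici.2 le_rfl) (left_mem_segment ℝ (dBasis 0) (dBasis 1)))⟩

/-- The base point `-e₀` of the double fan. -/
def dMinus : ↥DoubleFan :=
  ⟨-dBasis 0, Set.mem_union_right _
    (Set.mem_biUnion (Set.mem_Ici.2 le_rfl) (left_mem_segment ℝ (-dBasis 0) (dBasis 1)))⟩

/-!
A homeomorphism of `D` fixing the marked points can only slide points inside a gap between two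
consecutive marked points `(1 - 1/(j+1)) a + eₙ/(j+1)` and `(1 - 1/j) a + eₙ/j` of a wedge, but
inside such a gap it can move any point to any other one. Every compact-open neighbourhood of
the identity contains all such homeomorphisms fixing some compact set `K` pointwise, and since
`K` is compact in `ℓ²`, its `n`-th coordinates are below `1/k` for all large `n`. On such a wedge
π-uniformity makes `f` oscillate by at most `ε` across each of the `k - 1` gaps between level
`1/k` and the tip `eₙ`, on both sides `±e₀`. Taking `ε` of order `1/k` and `k` large, continuity
of `f` at `±e₀` makes `|f e₀ - f (-e₀)|` arbitrarily small.
-/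

open Set Filter Topology Metric
open scoped ENNReal

lemma dist_le_of_forall_mem_Ioo {X : Type*} [PseudoMetricSpace X] {F : ℝ → X}
    (hF : Continuous F) {a b ε : ℝ} (hab : a < b)
    (h : ∀ c ∈ Ioo a b, ∀ d ∈ Ioo c b, dist (F c) (F d) ≤ ε) : dist (F a) (F b) ≤ ε := by
  have hlim : ∀ {l : Filter ℝ} {x : ℝ}, l ≤ 𝓝 x → Tendsto F l (𝓝 (F x)) :=
    fun hl => (hF.tendsto _).mono_left hl
  refine le_of_tendsto ((hlim nhdsWithin_le_nhds).comp tendsto_fst |>.dist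
    ((hlim nhdsWithin_le_nhds).comp tendsto_snd) : Tendsto (fun p : ℝ × ℝ => dist (F p.1) (F p.2))
      (𝓝[>] a ×ˢ 𝓝[<] b) _) ?_
  filter_upwards [prod_mem_prod (Ioo_mem_nhdsGT (left_lt_add_div_two.2 hab))
    (Ioo_mem_nhdsLT (add_div_two_lt_right.2 hab))] with p ⟨hp₁, hp₂⟩
  exact h p.1 ⟨hp₁.1, hp₁.2.trans (hp₂.1.trans hp₂.2)⟩ p.2 ⟨hp₁.2.trans hp₂.1, hp₂.2⟩

lemma inv_natCast_not_mem_Ioo (j k : ℕ) : (k : ℝ)⁻¹ ∉ Ioo ((j + 1 : ℕ) : ℝ)⁻¹ (j : ℝ)⁻¹ := by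
  rintro ⟨h₁, h₂⟩
  have hk : (0 : ℝ) < k := inv_pos.1 ((by positivity : (0 : ℝ) < ((j + 1 : ℕ) : ℝ)⁻¹).trans h₁)
  have hj : (0 : ℝ) < j := inv_pos.1 ((inv_pos.2 hk).trans h₂)
  rw [inv_lt_inv₀ (by positivity) hk] at h₁
  rw [inv_lt_inv₀ hk hj] at h₂
  norm_cast at h₁ h₂
  omega

lemma OrderIso.apply_mem_Ioo_of_forall_not_mem {X : Type*} [Preorder X] (h : X ≃o X) {a b t : X}
    (hh : ∀ u ∉ Ioo a b, h u = u) (ht : t ∈ Ioo a b) : h t ∈ Ioo a b := by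
  have ha := hh a (fun hu => lt_irrefl a hu.1)
  have hb := hh b (fun hu => lt_irrefl b hu.2)
  exact ⟨ha ▸ h.strictMono ht.1, hb ▸ h.strictMono ht.2⟩

lemma exists_orderIso_eq_id_off_Ioo {a b c d : ℝ} (hac : a < c) (hcd : c < d) (hdb : d < b) :
    ∃ h : ℝ ≃o ℝ, (∀ t ∉ Ioo a b, h t = t) ∧ h c = d := by
  -- the piecewise linear map through `(a, a)`, `(c, d)`, `(b, b)`, and the identity off `[a, b]`
  set φ : ℝ → ℝ := fun t =>
    max t (min (a + (t - a) * ((d - a) / (c - a))) (b + (t - b) * ((b - d) / (b - c))))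
  have hm₁ : 1 ≤ (d - a) / (c - a) := (one_le_div (by linarith)).2 (by linarith)
  have hm₂ : 0 < (b - d) / (b - c) := div_pos (by linarith) (by linarith)
  have hm₂' : (b - d) / (b - c) ≤ 1 := (div_le_one (by linarith)).2 (by linarith)
  have hfix : ∀ t ∉ Ioo a b, φ t = t := by
    intro t ht
    refine max_eq_left ?_
    rcases not_and_or.1 ht with hta | htb
    · refine min_le_of_left_le ?_
      nlinarith [not_lt.1 hta]
    · refine min_le_of_right_le ?_
      nlinarith [not_lt.1 htb]
  have hmono : StrictMono φ := fun t u htu =>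
    max_lt_max htu (min_lt_min (by gcongr) (by gcongr))
  have hsurj : Function.Surjective φ := by
    refine Continuous.surjective (by fun_prop) ?_ ?_
    · exact tendsto_atTop_mono (fun t => le_max_left _ _) tendsto_id
    · refine tendsto_id.congr' ?_
      filter_upwards [eventually_le_atBot a] with t ht
      exact (hfix t fun h => not_lt.2 ht h.1).symm
  refine ⟨hmono.orderIsoOfSurjective φ hsurj, hfix, ?_⟩
  show φ c = d
  have h₁ : a + (c - a) * ((d - a) / (c - a)) = d := by
    rw [mul_div_cancel₀ _ (by linarith)]; ring
  have h₂ : b + (c - b) * ((b - d) / (b - c)) = d := by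
    rw [show c - b = -(b - c) by ring, neg_mul, mul_div_cancel₀ _ (by linarith)]; ring
  simp only [φ, h₁, h₂, min_self, max_eq_right hcd.le]

lemma ContinuousMap.exists_isCompact_of_mem_nhds {X Y : Type*} [TopologicalSpace X]
    [TopologicalSpace Y] {f : C(X, Y)} {U : Set C(X, Y)} (hU : U ∈ 𝓝 f) :
    ∃ K, IsCompact K ∧ ∀ g : C(X, Y), EqOn g f K → g ∈ U := by
  have hle : (⨅ K ∈ {K : Set X | IsCompact K}, 𝓟 {g : C(X, Y) | EqOn g f K}) ≤ 𝓝 f := by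
    rw [ContinuousMap.nhds_compactOpen]
    refine le_iInf₂ fun K hK => le_iInf₂ fun V _ => le_iInf fun hfKV => ?_
    exact iInf₂_le_of_le K hK (principal_mono.2 fun g hg x hx => hg hx ▸ hfKV hx)
  have hdir : DirectedOn ((fun K => 𝓟 {g : C(X, Y) | EqOn g f K}) ⁻¹'o (· ≥ ·))
      {K : Set X | IsCompact K} := fun K₁ h₁ K₂ h₂ =>
    ⟨K₁ ∪ K₂, h₁.union h₂, principal_mono.2 fun _ hg => hg.mono subset_union_left,
      principal_mono.2 fun _ hg => hg.mono subset_union_right⟩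
  obtain ⟨K, hK, hKU⟩ := (mem_biInf_of_directed hdir ⟨∅, isCompact_empty⟩).1 (hle hU)
  exact ⟨K, hK, fun g hg => hKU hg⟩

lemma lp.eventually_forall_norm_apply_lt_of_isCompact {ι : Type*} {E : ι → Type*}
    [∀ i, NormedAddCommGroup (E i)] {p : ℝ≥0∞} [Fact (1 ≤ p)] (hp : 0 < p.toReal)
    {K : Set (lp E p)} (hK : IsCompact K) {r : ℝ} (hr : 0 < r) :
    ∀ᶠ i in cofinite, ∀ x ∈ K, ‖x i‖ < r := by
  obtain ⟨T, -, hT, hKT⟩ := finite_cover_balls_of_compact hK (half_pos hr)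
  have hsmall : ∀ y : lp E p, ∀ᶠ i in cofinite, ‖y i‖ < r / 2 := fun y =>
    ((y.2.summable hp).tendsto_cofinite_zero.eventually_lt_const
      (by positivity : (0 : ℝ) < (r / 2) ^ p.toReal)).mono fun i hi =>
        (Real.rpow_lt_rpow_iff (norm_nonneg _) (half_pos hr).le hp).1 hi
  filter_upwards [(hT.eventually_all).2 fun y _ => hsmall y] with i hi x hx
  obtain ⟨y, hyT, hxy⟩ := mem_iUnion₂.1 (hKT hx)
  calc ‖x i‖ ≤ ‖y i‖ + ‖(x - y) i‖ := by
        rw [lp.coeFn_sub, Pi.sub_apply]; exact norm_le_norm_add_norm_sub' _ _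
    _ ≤ ‖y i‖ + ‖x - y‖ := by
        gcongr; exact lp.norm_apply_le_norm (zero_lt_one.trans_le Fact.out).ne' _ _
    _ < r / 2 + r / 2 := add_lt_add (hi y hyT) (by rwa [mem_ball, dist_eq_norm] at hxy)
    _ = r := add_halves r

lemma dBasis_apply (n m : ℕ) : dBasis n m = if m = n then 1 else 0 := by
  rw [dBasis, lp.single_apply, Pi.single_apply]

lemma norm_dBasis (n : ℕ) : ‖dBasis n‖ = 1 := by
  rw [dBasis, lp.norm_single (by norm_num), norm_one]

lemma DFanAmbient.smul_add_smul_apply (a b : ℝ) (x y : DFanAmbient) (m : ℕ) :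
    (a • x + b • y) m = a * x m + b * y m := by
  rw [lp.coeFn_add, Pi.add_apply, lp.coeFn_smul, lp.coeFn_smul, Pi.smul_apply, Pi.smul_apply,
    smul_eq_mul, smul_eq_mul]

lemma DFanAmbient.continuous_apply (n : ℕ) : Continuous fun x : DFanAmbient => x n :=
  (_root_.continuous_apply n).comp lp.uniformContinuous_coe.continuous

namespace DoubleFan

def fanPt (s : ℝ) (n : ℕ) (t : ℝ) : DFanAmbient := (s * (1 - t)) • dBasis 0 + t • dBasis n

variable {s t : ℝ} {n : ℕ}

lemma fanPt_apply_zero (hn : n ≠ 0) : fanPt s n t 0 = s * (1 - t) := by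
  simp [fanPt, DFanAmbient.smul_add_smul_apply, dBasis_apply, hn.symm]

lemma fanPt_apply_self (hn : n ≠ 0) : fanPt s n t n = t := by
  simp [fanPt, DFanAmbient.smul_add_smul_apply, dBasis_apply, hn]

lemma fanPt_apply_of_ne {m : ℕ} (hm : m ≠ 0) (hmn : m ≠ n) : fanPt s n t m = 0 := by
  simp [fanPt, DFanAmbient.smul_add_smul_apply, dBasis_apply, hm, hmn]

lemma fanPt_zero (s : ℝ) (n : ℕ) : fanPt s n 0 = s • dBasis 0 := by
  simp [fanPt]

lemma fanPt_one (s : ℝ) (n : ℕ) : fanPt s n 1 = dBasis n := by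
  simp [fanPt]

lemma fanPt_mem (hs : s = 1 ∨ s = -1) (hn : 0 < n) (ht : t ∈ Icc 0 1) :
    fanPt s n t ∈ DoubleFan := by
  have hseg : ∀ a, (s * (1 - t)) • dBasis 0 = (1 - t) • a → fanPt s n t ∈ segment ℝ a (dBasis n) :=
    fun a ha => ⟨1 - t, t, by linarith [ht.2], ht.1, by ring, by rw [fanPt, ha]⟩
  rcases hs with rfl | rfl
  · exact mem_union_left _ (mem_biUnion hn (hseg _ (by rw [one_mul])))
  · exact mem_union_right _ (mem_biUnion hn (hseg _ (by rw [smul_neg, neg_one_mul, neg_smul])))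

lemma exists_eq_fanPt {x : DFanAmbient} (hx : x ∈ DoubleFan) :
    ∃ s m t, (s = 1 ∨ s = -1) ∧ 0 < m ∧ x = fanPt s m t := by
  rcases hx with hx | hx <;> obtain ⟨m, hm, a, t, -, -, hat, rfl⟩ := mem_iUnion₂.1 hx <;>
    obtain rfl : a = 1 - t := by linarith
  · exact ⟨1, m, t, .inl rfl, hm, by rw [fanPt, one_mul]⟩
  · exact ⟨-1, m, t, .inr rfl, hm, by rw [fanPt, neg_one_mul, neg_smul, smul_neg]⟩

lemma exists_eq_fanPt_apply {x : DFanAmbient} (hx : x ∈ DoubleFan) (hn : n ≠ 0)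
    (hxn : 0 < x n) : ∃ s, (s = 1 ∨ s = -1) ∧ x = fanPt s n (x n) := by
  obtain ⟨s, m, t, hs, hm, rfl⟩ := exists_eq_fanPt hx
  obtain rfl : m = n := by
    by_contra hmn
    rw [fanPt_apply_of_ne hn (Ne.symm hmn)] at hxn
    exact hxn.false
  exact ⟨s, hs, by rw [fanPt_apply_self hn]⟩

lemma dist_fanPt_le (hs : s = 1 ∨ s = -1) (n : ℕ) (t t' : ℝ) :
    dist (fanPt s n t) (fanPt s n t') ≤ 2 * |t - t'| := by
  have habs : |s| = 1 := by rcases hs with rfl | rfl <;> simp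
  have hsub : fanPt s n t - fanPt s n t' = (s * (t' - t)) • dBasis 0 + (t - t') • dBasis n := by
    simp only [fanPt]; module
  calc dist (fanPt s n t) (fanPt s n t')
      ≤ ‖(s * (t' - t)) • dBasis 0‖ + ‖(t - t') • dBasis n‖ := by
        rw [dist_eq_norm, hsub]; exact norm_add_le _ _
    _ = 2 * |t - t'| := by
        simp only [norm_smul, norm_dBasis, Real.norm_eq_abs, abs_mul, habs, abs_sub_comm t']
        ring

lemma apply_eq_zero_or_inv_of_mem_DMarked {x : ↥DoubleFan} (hx : x ∈ DMarked) (hn : n ≠ 0) :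
    (x : DFanAmbient) n = 0 ∨ ∃ k : ℕ, (x : DFanAmbient) n = (k : ℝ)⁻¹ := by
  obtain ⟨a, k, m, ha, -, -, hxa⟩ := hx
  have ha0 : a n = 0 := by rcases ha with rfl | rfl <;> simp [dBasis_apply, hn]
  rw [hxa]
  by_cases hnm : n = m
  · exact .inr ⟨k, by simp [DFanAmbient.smul_add_smul_apply, ha0, dBasis_apply, hnm]⟩
  · exact .inl (by simp [DFanAmbient.smul_add_smul_apply, ha0, dBasis_apply, hnm])

section fanPath

def fanPath (hs : s = 1 ∨ s = -1) (hn : 0 < n) (t : ℝ) : ↥DoubleFan :=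
  ⟨fanPt s n (projIcc 0 1 zero_le_one t), fanPt_mem hs hn (projIcc 0 1 zero_le_one t).2⟩

variable (hs : s = 1 ∨ s = -1) (hn : 0 < n)

lemma coe_fanPath (ht : t ∈ Icc 0 1) : (fanPath hs hn t : DFanAmbient) = fanPt s n t := by
  simp [fanPath, projIcc_of_mem _ ht]

lemma continuous_fanPath : Continuous (fanPath hs hn) := by
  refine Continuous.subtype_mk ?_ _
  simp only [fanPt]
  fun_prop

lemma fanPath_zero_eq_dPlus : fanPath (.inl rfl) hn 0 = dPlus := Subtype.ext <| by
  rw [coe_fanPath _ hn (left_mem_Icc.2 zero_le_one), fanPt_zero, one_smul]; rfl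

lemma fanPath_zero_eq_dMinus : fanPath (.inr rfl) hn 0 = dMinus := Subtype.ext <| by
  rw [coe_fanPath _ hn (left_mem_Icc.2 zero_le_one), fanPt_zero, neg_one_smul]; rfl

lemma fanPath_one_eq {s' : ℝ} (hs' : s' = 1 ∨ s' = -1) : fanPath hs hn 1 = fanPath hs' hn 1 :=
  Subtype.ext <| by
    rw [coe_fanPath _ hn (right_mem_Icc.2 zero_le_one),
      coe_fanPath _ hn (right_mem_Icc.2 zero_le_one), fanPt_one, fanPt_one]

end fanPath

-- On the `n`-th wedge, `x 0 / (1 - x n)` is the side `s = ±1` of `x`.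
def wedgeMap (n : ℕ) (h : ℝ → ℝ) (x : DFanAmbient) : DFanAmbient :=
  x + (h (x n) - x n) • dBasis n - ((h (x n) - x n) / (1 - x n) * x 0) • dBasis 0

section wedgeMap

variable {h : ℝ → ℝ}

lemma wedgeMap_of_apply_eq {x : DFanAmbient} (hx : h (x n) = x n) : wedgeMap n h x = x := by
  simp [wedgeMap, hx]

lemma wedgeMap_fanPt (hn : n ≠ 0) (h1 : h 1 = 1) (s t : ℝ) :
    wedgeMap n h (fanPt s n t) = fanPt s n (h t) := by
  rcases eq_or_ne t 1 with rfl | ht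
  · rw [h1]
    exact wedgeMap_of_apply_eq (by rw [fanPt_apply_self hn, h1])
  · have hside : (h t - t) / (1 - t) * (s * (1 - t)) = (h t - t) * s := by
      field_simp [sub_ne_zero.2 ht.symm]
    rw [wedgeMap, fanPt_apply_self hn, fanPt_apply_zero hn, hside]
    simp only [fanPt]
    module

lemma continuous_wedgeMap (hh : Continuous h) (h1 : ∀ᶠ t in 𝓝 1, h t = t) :
    Continuous (wedgeMap n h) := by
  have hκ : Continuous fun t => (h t - t) / (1 - t) := by
    refine continuous_iff_continuousAt.2 fun t => ?_
    rcases eq_or_ne t 1 with rfl | ht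
    · refine (continuousAt_const (y := (0 : ℝ))).congr ?_
      filter_upwards [h1] with u hu
      rw [hu, sub_self, zero_div]
    · exact (hh.continuousAt.sub continuousAt_id).div (continuousAt_const.sub continuousAt_id)
        (sub_ne_zero.2 ht.symm)
  have hx := DFanAmbient.continuous_apply
  exact (continuous_id.add (((hh.comp (hx n)).sub (hx n)).smul continuous_const)).sub
    (((hκ.comp (hx n)).mul (hx 0)).smul continuous_const)

end wedgeMap

section wedgeHomeomorph

variable {a b : ℝ} {h : ℝ ≃o ℝ}

lemma wedgeMap_mem (hn : 0 < n) (ha : 0 ≤ a) (hb : b ≤ 1) (hh : ∀ t ∉ Ioo a b, h t = t)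
    {x : DFanAmbient} (hx : x ∈ DoubleFan) : wedgeMap n h x ∈ DoubleFan := by
  by_cases hxn : x n ∈ Ioo a b
  · obtain ⟨s, hs, hxs⟩ := exists_eq_fanPt_apply hx hn.ne' (ha.trans_lt hxn.1)
    have hht := OrderIso.apply_mem_Ioo_of_forall_not_mem h hh hxn
    rw [hxs, wedgeMap_fanPt hn.ne' (hh 1 fun h1 => h1.2.not_ge hb)]
    exact fanPt_mem hs hn ⟨ha.trans hht.1.le, hht.2.le.trans hb⟩
  · rwa [wedgeMap_of_apply_eq (hh _ hxn)]

lemma wedgeMap_symm_wedgeMap (hn : 0 < n) (ha : 0 ≤ a) (hb : b ≤ 1)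
    (hh : ∀ t ∉ Ioo a b, h t = t) {x : DFanAmbient} (hx : x ∈ DoubleFan) :
    wedgeMap n h.symm (wedgeMap n h x) = x := by
  have hh' : ∀ t ∉ Ioo a b, h.symm t = t := fun t ht => h.symm_apply_eq.2 (hh t ht).symm
  have h1 : (1 : ℝ) ∉ Ioo a b := fun h1 => h1.2.not_ge hb
  by_cases hxn : x n ∈ Ioo a b
  · obtain ⟨s, hs, hxs⟩ := exists_eq_fanPt_apply hx hn.ne' (ha.trans_lt hxn.1)
    rw [hxs, wedgeMap_fanPt hn.ne' (hh 1 h1), wedgeMap_fanPt hn.ne' (hh' 1 h1),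
      h.symm_apply_apply]
  · rw [wedgeMap_of_apply_eq (hh _ hxn), wedgeMap_of_apply_eq (hh' _ hxn)]

lemma exists_homeomorph_wedgeMap (hn : 0 < n) (ha : 0 ≤ a) (hb : b < 1)
    (hh : ∀ t ∉ Ioo a b, h t = t) :
    ∃ g : ↥DoubleFan ≃ₜ ↥DoubleFan, ∀ x, (g x : DFanAmbient) = wedgeMap n h x := by
  have hh' : ∀ t ∉ Ioo a b, h.symm t = t := fun t ht => h.symm_apply_eq.2 (hh t ht).symm
  have hcont : ∀ e : ℝ ≃o ℝ, (∀ t ∉ Ioo a b, e t = t) → Continuous (wedgeMap n e) :=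
    fun e he => continuous_wedgeMap e.continuous <|
      (eventually_gt_nhds hb).mono fun t ht => he t fun hab => hab.2.not_gt ht
  exact ⟨{ toFun := fun x => ⟨wedgeMap n h x, wedgeMap_mem hn ha hb.le hh x.2⟩
           invFun := fun x => ⟨wedgeMap n h.symm x, wedgeMap_mem hn ha hb.le hh' x.2⟩
           left_inv := fun x => Subtype.ext (wedgeMap_symm_wedgeMap hn ha hb.le hh x.2)
           right_inv := fun x => Subtype.ext <| by
             simpa using wedgeMap_symm_wedgeMap hn ha hb.le (h := h.symm) hh' x.2
           continuous_toFun := ((hcont h hh).comp continuous_subtype_val).subtype_mk _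
           continuous_invFun := ((hcont _ hh').comp continuous_subtype_val).subtype_mk _ },
    fun _ => rfl⟩

end wedgeHomeomorph

lemma exists_forall_apply_lt_of_isCompact {K : Set ↥DoubleFan} (hK : IsCompact K) {r : ℝ}
    (hr : 0 < r) : ∃ n, 0 < n ∧ ∀ x ∈ K, (x : DFanAmbient) n < r := by
  have hK' : IsCompact (((↑) : ↥DoubleFan → DFanAmbient) '' K) :=
    hK.image continuous_subtype_val
  have hev := lp.eventually_forall_norm_apply_lt_of_isCompact
    (by norm_num : 0 < (2 : ℝ≥0∞).toReal) hK' hr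
  rw [Nat.cofinite_eq_atTop] at hev
  obtain ⟨n, hn, hpos⟩ := (hev.and (eventually_gt_atTop 0)).exists
  exact ⟨n, hpos, fun x hx => (le_abs_self _).trans_lt (hn x (mem_image_of_mem _ hx))⟩

lemma exists_isCompact_of_mem_nhds_one {V : Set DGroup} (hV : V ∈ 𝓝 1) :
    ∃ K : Set ↥DoubleFan, IsCompact K ∧
      ∀ g : DGroup, (∀ x ∈ K, (g : ↥DoubleFan ≃ₜ ↥DoubleFan) x = x) → g ∈ V := by
  rw [nhds_induced] at hV
  obtain ⟨W, hW, hWV⟩ := hV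
  obtain ⟨K, hK, hKW⟩ := ContinuousMap.exists_isCompact_of_mem_nhds hW
  exact ⟨K, hK, fun g hg => hWV (hKW _ hg)⟩

variable {f : ↥DoubleFan → ℝ} {ε : ℝ} {K : Set ↥DoubleFan}

lemma dist_fanPath_lt_of_mem_Ioo
    (hK : ∀ g : DGroup, (∀ x ∈ K, (g : ↥DoubleFan ≃ₜ ↥DoubleFan) x = x) →
      ∀ x, dist (f x) (f ((g : ↥DoubleFan ≃ₜ ↥DoubleFan) x)) < ε)
    (hs : s = 1 ∨ s = -1) (hn : 0 < n) {a b : ℝ} (ha : 0 < a) (hb : b ≤ 1)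
    (hmarked : ∀ k : ℕ, (k : ℝ)⁻¹ ∉ Ioo a b) (hKn : ∀ x ∈ K, (x : DFanAmbient) n ≤ a)
    {c d : ℝ} (hc : c ∈ Ioo a b) (hd : d ∈ Ioo c b) :
    dist (f (fanPath hs hn c)) (f (fanPath hs hn d)) < ε := by
  set b' := (d + b) / 2
  have hdb' : d < b' := left_lt_add_div_two.2 hd.2
  have hb'b : b' < b := add_div_two_lt_right.2 hd.2
  obtain ⟨h, hh, hcd⟩ := exists_orderIso_eq_id_off_Ioo hc.1 hd.1 hdb'
  obtain ⟨g, hg⟩ := exists_homeomorph_wedgeMap hn ha.le (hb'b.trans_le hb) hh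
  have hfix : ∀ x : ↥DoubleFan, (x : DFanAmbient) n ∉ Ioo a b → g x = x := fun x hx =>
    Subtype.ext <| by
      rw [hg]
      exact wedgeMap_of_apply_eq (hh _ fun hx' => hx (Ioo_subset_Ioo_right hb'b.le hx'))
  have hgD : g ∈ DGroup := fun x hx => hfix x <| by
    rcases apply_eq_zero_or_inv_of_mem_DMarked hx hn.ne' with h0 | ⟨k, hk⟩
    · rw [h0]
      exact fun h0' => ha.not_gt h0'.1
    · rw [hk]
      exact hmarked k
  have hgc : g (fanPath hs hn c) = fanPath hs hn d := by
    have hIcc : ∀ t ∈ Ioo a b, t ∈ Icc (0 : ℝ) 1 := fun t ht =>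
      ⟨ha.le.trans ht.1.le, ht.2.le.trans hb⟩
    apply Subtype.ext
    rw [hg, coe_fanPath hs hn (hIcc c hc), coe_fanPath hs hn (hIcc d ⟨hc.1.trans hd.1, hd.2⟩),
      wedgeMap_fanPt hn.ne' (hh 1 fun h1 => h1.2.not_ge (hb'b.le.trans hb)), hcd]
  simpa [hgc] using hK ⟨g, hgD⟩ (fun x hx => hfix x fun hx' => (hKn x hx).not_gt hx'.1)
    (fanPath hs hn c)

lemma dist_fanPath_one_le (hf : Continuous f)
    (hK : ∀ g : DGroup, (∀ x ∈ K, (g : ↥DoubleFan ≃ₜ ↥DoubleFan) x = x) →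
      ∀ x, dist (f x) (f ((g : ↥DoubleFan ≃ₜ ↥DoubleFan) x)) < ε)
    (hs : s = 1 ∨ s = -1) (hn : 0 < n) {m : ℕ}
    (hKn : ∀ x ∈ K, (x : DFanAmbient) n ≤ ((m + 1 : ℕ) : ℝ)⁻¹) :
    dist (f (fanPath hs hn 1)) (f (fanPath hs hn ((m + 1 : ℕ) : ℝ)⁻¹)) ≤ m * ε := by
  have hstep : ∀ {i}, i < m → dist (f (fanPath hs hn ((i + 1 : ℕ) : ℝ)⁻¹))
      (f (fanPath hs hn ((i + 1 + 1 : ℕ) : ℝ)⁻¹)) ≤ ε := by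
    intro i hi
    rw [dist_comm]
    refine dist_le_of_forall_mem_Ioo (hf.comp (continuous_fanPath hs hn))
      (inv_strictAnti₀ (by positivity) (by norm_cast; omega)) fun c hc d hd =>
        (dist_fanPath_lt_of_mem_Ioo hK hs hn (by positivity)
          (inv_le_one_of_one_le₀ (by norm_cast; omega)) (inv_natCast_not_mem_Ioo _)
          (fun x hx => (hKn x hx).trans ?_) hc hd).le
    exact inv_anti₀ (by positivity) (by norm_cast; omega)
  simpa using dist_le_range_sum_of_dist_le
    (f := fun i : ℕ => f (fanPath hs hn ((i + 1 : ℕ) : ℝ)⁻¹)) m hstep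

lemma eventually_dist_fanPath_zero_lt (hf : Continuous f) (hs : s = 1 ∨ s = -1) {η : ℝ}
    (hη : 0 < η) : ∀ᶠ m : ℕ in atTop, ∀ n (hn : 0 < n),
      dist (f (fanPath hs hn 0)) (f (fanPath hs hn ((m + 1 : ℕ) : ℝ)⁻¹)) < η := by
  have hbase : ∀ n (hn : 0 < n), fanPath hs hn 0 = fanPath hs one_pos 0 := fun n hn =>
    Subtype.ext <| by
      rw [coe_fanPath hs hn (left_mem_Icc.2 zero_le_one),
        coe_fanPath hs one_pos (left_mem_Icc.2 zero_le_one), fanPt_zero, fanPt_zero]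
  obtain ⟨δ, hδ, hfδ⟩ := Metric.continuousAt_iff.1 hf.continuousAt η hη
  have hsmall := (tendsto_inv_atTop_nhds_zero_nat.comp (tendsto_add_atTop_nat 1)).eventually
    (gt_mem_nhds (half_pos hδ))
  filter_upwards [hsmall] with m hm n hn
  have hm' : (0 : ℝ) < ((m + 1 : ℕ) : ℝ)⁻¹ := by positivity
  rw [hbase n hn, dist_comm]
  refine hfδ ?_
  rw [← hbase n hn, Subtype.dist_eq,
    coe_fanPath hs hn ⟨hm'.le, inv_le_one_of_one_le₀ (by simp)⟩,
    coe_fanPath hs hn (left_mem_Icc.2 zero_le_one)]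
  calc _ ≤ 2 * |((m + 1 : ℕ) : ℝ)⁻¹ - 0| := dist_fanPt_le hs n _ _
    _ < δ := by
      rw [sub_zero, abs_of_pos hm']
      simp only [Function.comp_apply] at hm
      linarith

lemma eventually_forall_dist_fanPath_zero_lt (hf : Continuous f) {η : ℝ} (hη : 0 < η) :
    ∀ᶠ m : ℕ in atTop, ∀ s (hs : s = 1 ∨ s = -1) n (hn : 0 < n),
      dist (f (fanPath hs hn 0)) (f (fanPath hs hn ((m + 1 : ℕ) : ℝ)⁻¹)) < η := by
  filter_upwards [eventually_dist_fanPath_zero_lt hf (.inl rfl) hη,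
    eventually_dist_fanPath_zero_lt hf (.inr rfl) hη] with m hplus hminus s hs
  rcases hs with rfl | rfl
  exacts [hplus, hminus]

end DoubleFan

open DoubleFan

theorem stmt_15_general (f : ↥DoubleFan → ℝ) (hc : Continuous f)
    (hu : ∀ ε : ℝ, 0 < ε → ∃ V ∈ nhds (1 : DGroup), ∀ x : ↥DoubleFan, ∀ v ∈ V,
      |f x - f ((v : ↥DoubleFan ≃ₜ ↥DoubleFan) x)| < ε) :
    f dPlus = f dMinus := by
  refine eq_of_forall_dist_le fun η hη => ?_
  obtain ⟨m, hnear⟩ :=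
    (eventually_forall_dist_fanPath_zero_lt hc (by positivity : 0 < η / 4)).exists
  obtain ⟨V, hV, hVf⟩ := hu (η / (4 * (m + 1))) (by positivity)
  obtain ⟨K, hK, hKV⟩ := exists_isCompact_of_mem_nhds_one hV
  obtain ⟨n, hn, hKn⟩ := exists_forall_apply_lt_of_isCompact hK
    (by positivity : (0 : ℝ) < ((m + 1 : ℕ) : ℝ)⁻¹)
  have hmε : (m : ℝ) * (η / (4 * (m + 1))) ≤ η / 4 := by
    rw [mul_div_assoc', div_le_div_iff₀ (by positivity) (by positivity)]
    nlinarith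
  have hside : ∀ {s} (hs : s = 1 ∨ s = -1),
      dist (f (fanPath hs hn 0)) (f (fanPath hs hn 1)) ≤ η / 2 := fun hs => by
    have hchain := dist_fanPath_one_le hc
      (fun g hg x => by rw [Real.dist_eq]; exact hVf x g (hKV g hg)) hs hn
      (fun x hx => (hKn x hx).le)
    linarith [hnear _ hs n hn, dist_triangle_right (f (fanPath hs hn 0)) (f (fanPath hs hn 1))
      (f (fanPath hs hn ((m + 1 : ℕ) : ℝ)⁻¹))]
  have hplus := hside (.inl rfl)
  have hminus := hside (.inr rfl)
  rw [fanPath_zero_eq_dPlus] at hplus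
  rw [fanPath_zero_eq_dMinus, fanPath_one_eq _ hn (.inl rfl)] at hminus
  linarith [dist_triangle_right (f dPlus) (f dMinus) (f (fanPath (.inl rfl) hn 1))]

theorem stmt_15 (f : ↥DoubleFan → ℝ) (hc : Continuous f)
    (hb : ∃ C : ℝ, ∀ x : ↥DoubleFan, |f x| ≤ C)
    (hu : ∀ ε : ℝ, 0 < ε → ∃ V ∈ nhds (1 : DGroup), ∀ x : ↥DoubleFan, ∀ v ∈ V,
      |f x - f ((v : ↥DoubleFan ≃ₜ ↥DoubleFan) x)| < ε) :
    f dPlus = f dMinus :=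
  stmt_15_general f hc hu
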